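/- Under these hypotheses, AᵢBᵢψ = AⱼBⱼψ = −BᵢAᵢψ for all i, j ∈ {1,…,n}; in particular (AᵢBᵢ + BᵢAᵢ)ψ = 0 for every i ∈ {1,…,n}. -/

import Mathlib

/-!
Write `Cᵢ = AᵢBᵢ` and `φ = (Π_m B_m) ψ`. Since the `Bᵢ` are commuting involutions,
`Π_{m ∉ S} B_m = (Π_{m ∈ S} B_m)(Π_m B_m)`, and since `Aᵢ` commutes with `Bⱼ` for `i ≠ j`,
the maximal-violation relations become `Cᵢ φ = ψ` and `CᵢCⱼC_k φ = −ψ` for distinct `i, j, k`.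
As `n ≥ 3`, two distinct indices `i, j` admit a third one `k`, whence `CᵢCⱼψ = −ψ`, that is
`Cⱼψ = −Cᵢ⁻¹ψ = −BᵢAᵢψ`. Comparing through a third index gives `Cᵢψ = Cⱼψ` for all `i, j`.
-/

/-- The product `Π_{i ∈ S} T i` of the operators `T i`, `i ∈ S`, multiplied in
increasing order of the index; all products used below are over pairwise commuting
operators, so the order of the factors is irrelevant. -/
noncomputable def prodOver {H : Type*} [NormedAddCommGroup H] [InnerProductSpace ℂ H]
    {n : ℕ} (T : Fin n → H →L[ℂ] H) (S : Finset (Fin n)) : H →L[ℂ] H :=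
  ((S.sort (· ≤ ·)).map T).prod

theorem pairwise_commute_mul {ι M : Type*} [Monoid M] {A B : ι → M}
    (hA : Pairwise fun i j ↦ Commute (A i) (A j)) (hB : Pairwise fun i j ↦ Commute (B i) (B j))
    (hAB : Pairwise fun i j ↦ Commute (A i) (B j)) :
    Pairwise fun i j ↦ Commute ((A * B) i) ((A * B) j) := fun _ _ hij ↦
  ((hA hij).mul_right (hAB hij)).mul_left ((hAB hij.symm).symm.mul_right (hB hij))

section

variable {H : Type*} [NormedAddCommGroup H] [InnerProductSpace ℂ H] {n : ℕ}

theorem prodOver_eq_noncommProd {T : Fin n → H →L[ℂ] H}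
    (hT : Pairwise fun i j ↦ Commute (T i) (T j)) (S : Finset (Fin n)) :
    prodOver T S = S.noncommProd T (hT.set_pairwise _) := by
  simp_rw [prodOver, Finset.noncommProd, ← Finset.sort_eq S (· ≤ ·), Multiset.map_coe,
    Multiset.noncommProd_coe]

theorem prodOver_singleton (T : Fin n → H →L[ℂ] H) (i : Fin n) : prodOver T {i} = T i := by
  simp [prodOver]

theorem prodOver_insert {T : Fin n → H →L[ℂ] H} (hT : Pairwise fun i j ↦ Commute (T i) (T j))
    {i : Fin n} {S : Finset (Fin n)} (hi : i ∉ S) :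
    prodOver T (insert i S) = T i * prodOver T S := by
  rw [prodOver_eq_noncommProd hT, prodOver_eq_noncommProd hT,
    Finset.noncommProd_insert_of_notMem _ _ _ _ hi]

theorem prodOver_mul_prodOver {A B : Fin n → H →L[ℂ] H}
    (hA : Pairwise fun i j ↦ Commute (A i) (A j)) (hB : Pairwise fun i j ↦ Commute (B i) (B j))
    (hAB : Pairwise fun i j ↦ Commute (A i) (B j)) (S : Finset (Fin n)) :
    prodOver A S * prodOver B S = prodOver (A * B) S := by
  rw [prodOver_eq_noncommProd hA, prodOver_eq_noncommProd hB,
    prodOver_eq_noncommProd (pairwise_commute_mul hA hB hAB)]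
  exact (Finset.noncommProd_mul_distrib A B _ _ fun i _ j _ hij ↦ (hAB hij.symm).symm).symm

theorem prodOver_compl {T : Fin n → H →L[ℂ] H} (hT : Pairwise fun i j ↦ Commute (T i) (T j))
    (hT2 : ∀ i, T i * T i = 1) (S : Finset (Fin n)) :
    prodOver T Sᶜ = prodOver T S * prodOver T Finset.univ := by
  have hsq : prodOver T S * prodOver T S = 1 := by
    rw [prodOver_mul_prodOver hT hT hT, prodOver_eq_noncommProd (pairwise_commute_mul hT hT hT),
      Finset.noncommProd_eq_pow_card _ (T * T) _ 1 fun i _ ↦ hT2 i, one_pow]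
  have hunion : prodOver T Finset.univ = prodOver T S * prodOver T Sᶜ := by
    simp only [prodOver_eq_noncommProd hT, ← Finset.union_compl S]
    exact Finset.noncommProd_union_of_disjoint disjoint_compl_right T _
  rw [hunion, ← mul_assoc, hsq, one_mul]

theorem apply_eq_neg_of_apply_apply_eq_neg {C D : Fin n → H →L[ℂ] H} (hn : 3 ≤ n)
    (hDC : ∀ i, D i * C i = 1) {ψ : H} (hCC : ∀ i j, i ≠ j → C i (C j ψ) = -ψ) :
    (∀ i j, C i ψ = C j ψ) ∧ ∀ i, C i ψ = -D i ψ := by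
  have hneg : ∀ i j, i ≠ j → C j ψ = -D i ψ := fun i j hij ↦ by
    rw [← map_neg, ← hCC i j hij, ← mul_apply_eq_comp, hDC, one_apply_eq_self]
  have hall : ∀ i j, C i ψ = C j ψ := fun i j ↦ by
    obtain ⟨k, hki, hkj⟩ := Fin.exists_ne_and_ne_of_two_lt i j hn
    rw [hneg k i hki, hneg k j hkj]
  refine ⟨hall, fun i ↦ ?_⟩
  obtain ⟨j, hji, -⟩ := Fin.exists_ne_and_ne_of_two_lt i i hn
  rw [hall i j, hneg i j hji.symm]

end

theorem stmt9_general {H : Type*} [NormedAddCommGroup H] [InnerProductSpace ℂ H]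
    (n : ℕ) (hn : 3 ≤ n)
    (A B : Fin n → H →L[ℂ] H)
    (hAinv : ∀ i (x : H), A i (A i x) = x)
    (hBinv : ∀ i (x : H), B i (B i x) = x)
    (hAA : ∀ i j, i ≠ j → ∀ x : H, A i (A j x) = A j (A i x))
    (hAB : ∀ i j, i ≠ j → ∀ x : H, A i (B j x) = B j (A i x))
    (hBB : ∀ i j, i ≠ j → ∀ x : H, B i (B j x) = B j (B i x))
    (ψ : H)
    (hplus : ∀ i, A i (prodOver B (Finset.univ.erase i) ψ) = ψ)
    (hminus : ∀ S : Finset (Fin n), S.card = 3 →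
      prodOver A S (prodOver B Sᶜ ψ) = -ψ) :
    (∀ i j, A i (B i ψ) = A j (B j ψ)) ∧
    (∀ i, A i (B i ψ) = -(B i (A i ψ))) ∧
    (∀ i, A i (B i ψ) + B i (A i ψ) = 0) := by
  have hAA' : Pairwise fun i j ↦ Commute (A i) (A j) := fun i j hij ↦
    ContinuousLinearMap.ext (hAA i j hij)
  have hBB' : Pairwise fun i j ↦ Commute (B i) (B j) := fun i j hij ↦
    ContinuousLinearMap.ext (hBB i j hij)
  have hAB' : Pairwise fun i j ↦ Commute (A i) (B j) := fun i j hij ↦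
    ContinuousLinearMap.ext (hAB i j hij)
  set φ := prodOver B Finset.univ ψ
  have hrel : ∀ S, prodOver A S (prodOver B Sᶜ ψ) = prodOver (A * B) S φ := fun S ↦ by
    rw [prodOver_compl hBB' (fun i ↦ ContinuousLinearMap.ext (hBinv i)),
      ← prodOver_mul_prodOver hAA' hBB' hAB']
    rfl
  have hCφ : ∀ i, (A * B) i φ = ψ := fun i ↦ by
    rw [← prodOver_singleton (A * B) i, ← hrel, Finset.compl_singleton, prodOver_singleton,
      hplus]
  have hCC : ∀ i j, i ≠ j → (A * B) i ((A * B) j ψ) = -ψ := fun i j hij ↦ by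
    obtain ⟨k, hki, hkj⟩ := Fin.exists_ne_and_ne_of_two_lt i j hn
    have hS : ({i, j, k} : Finset (Fin n)).card = 3 :=
      Finset.card_eq_three.mpr ⟨i, j, k, hij, hki.symm, hkj.symm, rfl⟩
    have hC := pairwise_commute_mul hAA' hBB' hAB'
    rw [← hminus _ hS, hrel, prodOver_insert hC (by simp [hij, hki.symm]),
      prodOver_insert hC (by simp [hkj.symm]), prodOver_singleton]
    simp only [mul_apply_eq_comp, hCφ]
  obtain ⟨hall, hanti⟩ := apply_eq_neg_of_apply_apply_eq_neg (D := B * A) hn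
    (fun i ↦ ContinuousLinearMap.ext fun x ↦ by simp [hAinv, hBinv]) hCC
  have hanti' : ∀ i, A i (B i ψ) = -(B i (A i ψ)) := hanti
  exact ⟨hall, hanti', fun i ↦ by rw [hanti' i, neg_add_cancel]⟩

/-- in a complex Hilbert space `H`, fix `n ≥ 3`, a unit vector `ψ`,
and observables `A₁,…,Aₙ,B₁,…,Bₙ` (self-adjoint involutive continuous linear
operators) satisfying the compatibility relations, together with the
maximal-violation relations of `Iₙ`: `Aᵢ (Π_{j≠i} Bⱼ) ψ = ψ` for every `i`, and
`Aᵢ Aⱼ A_k (Π_{m∉{i,j,k}} B_m) ψ = −ψ` for every triple `i < j < k` (expressed via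
three-element subsets `S`).  Then `AᵢBᵢψ = AⱼBⱼψ = −BᵢAᵢψ` for all `i, j`; in
particular `(AᵢBᵢ + BᵢAᵢ)ψ = 0` for every `i`. -/
theorem stmt9 {H : Type*} [NormedAddCommGroup H] [InnerProductSpace ℂ H]
    (n : ℕ) (hn : 3 ≤ n)
    (A B : Fin n → H →L[ℂ] H)
    (hAsa : ∀ i (x y : H), (inner ℂ (A i x) y : ℂ) = inner ℂ x (A i y))
    (hBsa : ∀ i (x y : H), (inner ℂ (B i x) y : ℂ) = inner ℂ x (B i y))
    (hAinv : ∀ i (x : H), A i (A i x) = x)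
    (hBinv : ∀ i (x : H), B i (B i x) = x)
    (hAA : ∀ i j, i ≠ j → ∀ x : H, A i (A j x) = A j (A i x))
    (hAB : ∀ i j, i ≠ j → ∀ x : H, A i (B j x) = B j (A i x))
    (hBB : ∀ i j, i ≠ j → ∀ x : H, B i (B j x) = B j (B i x))
    (ψ : H) (hψ : ‖ψ‖ = 1)
    (hplus : ∀ i, A i (prodOver B (Finset.univ.erase i) ψ) = ψ)
    (hminus : ∀ S : Finset (Fin n), S.card = 3 →
      prodOver A S (prodOver B Sᶜ ψ) = -ψ) :
    (∀ i j, A i (B i ψ) = A j (B j ψ)) ∧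
    (∀ i, A i (B i ψ) = -(B i (A i ψ))) ∧
    (∀ i, A i (B i ψ) + B i (A i ψ) = 0) :=
  stmt9_general n hn A B hAinv hBinv hAA hAB hBB ψ hplus hminus
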